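/- For $\sigma \in S_{2n}$ defined by $\sigma(2k-1) = 2\pi_1(k)-1$ and $\sigma(2k) = 2\pi_2(k)$ for $k=1,\dots,n$, where $\pi_1, \pi_2 \in S_n$, the coset-type of $\sigma$ equals the cycle-type of $\pi_1\pi_2^{-1}$. -/

import Mathlib

open scoped Classical

noncomputable section

/-- The vertex `2k-1` (0-indexed: `2k`). -/
def lo (n : ℕ) (k : Fin n) : Fin (2*n) := ⟨2*k.1, by have := k.2; omega⟩
/-- The vertex `2k` (0-indexed: `2k+1`). -/
def hi (n : ℕ) (k : Fin n) : Fin (2*n) := ⟨2*k.1+1, by have := k.2; omega⟩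

/-- The hyperoctahedral group `H_n ⊆ S_{2n}`, generated by the transpositions
`(2k-1, 2k)` and the double transpositions `(2i-1, 2j-1)(2i, 2j)` for `i < j`. -/
def hyperoctahedral (n : ℕ) : Subgroup (Equiv.Perm (Fin (2*n))) :=
  Subgroup.closure
    ({g | ∃ k : Fin n, g = Equiv.swap (lo n k) (hi n k)} ∪
     {g | ∃ i j : Fin n, i < j ∧
        g = Equiv.swap (lo n i) (lo n j) * Equiv.swap (hi n i) (hi n j)})

/-- The graph `Γ(σ)` on vertices `1, …, 2n` with edges `{2k-1, 2k}` and
`{σ(2k-1), σ(2k)}` for `k = 1, …, n`. -/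
def pairGraph (n : ℕ) (σ : Equiv.Perm (Fin (2*n))) : SimpleGraph (Fin (2*n)) :=
  SimpleGraph.fromRel (fun x y => ∃ k : Fin n,
    (x = lo n k ∧ y = hi n k) ∨ (x = σ (lo n k) ∧ y = σ (hi n k)))

/-- `ℓ′(σ)`, the number of connected components of `Γ(σ)`. -/
def compCount (n : ℕ) (σ : Equiv.Perm (Fin (2*n))) : ℕ :=
  Nat.card (pairGraph n σ).ConnectedComponent

/-- The coset-type of `σ ∈ S_{2n}`: the multiset of half the sizes of the
connected components of `Γ(σ)`; it is a partition of `n`. -/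
def cosetType (n : ℕ) (σ : Equiv.Perm (Fin (2*n))) : Multiset ℕ :=
  haveI : Fintype (pairGraph n σ).ConnectedComponent := Fintype.ofFinite _
  (Finset.univ : Finset (pairGraph n σ).ConnectedComponent).val.map
    (fun c => c.supp.ncard / 2)

/-!
Both vertices of each pair `{2k-1, 2k}` are adjacent in `Γ(σ)`, and the σ-edges join
`2π₁(k)-1` to `2π₂(k)`. Collapsing each pair to its index therefore joins `π₂(k)` to
`π₁(k)`, so two vertices of `Γ(σ)` are connected iff their indices lie in the same cycle
of `π₁π₂⁻¹`. Each component is thus the union of the pairs indexed by one cycle, and has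
twice its length; fixed points give the components of size 2, i.e. the parts equal to 1.
-/

open Finset

namespace Equiv.Perm

variable {α : Type*}

theorem SameCycle.rel_of_equivalence {f : Perm α} {r : α → α → Prop} (hr : Equivalence r)
    (hf : ∀ x, r (f x) x) {x y : α} (h : f.SameCycle x y) : r x y := by
  obtain ⟨i, rfl⟩ := h
  induction i using Int.induction_on with
  | zero => exact hr.refl x
  | succ i ih =>
    rw [add_comm, zpow_add, zpow_one, mul_apply]
    exact hr.trans ih (hr.symm (hf _))
  | pred i ih =>
    rw [sub_eq_neg_add, zpow_add, zpow_neg_one, mul_apply]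
    exact hr.trans ih (by simpa using hf (f⁻¹ ((f ^ (-(i : ℤ))) x)))

variable (f : Perm α)

theorem setOf_sameCycle_eq_singleton {x : α} (hx : f x = x) :
    {y | f.SameCycle x y} = {x} := by
  ext y
  exact ⟨fun h => (h.eq_of_left hx).symm, by rintro rfl; exact SameCycle.refl _ _⟩

theorem setOf_mk_eq_eq_setOf_sameCycle_out (q : Quotient (SameCycle.setoid f)) :
    {x | ⟦x⟧ = q} = {y | f.SameCycle q.out y} := by
  ext x
  exact Quotient.mk_eq_iff_out.trans ⟨SameCycle.symm, SameCycle.symm⟩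

variable [Fintype α] [DecidableEq α]

theorem setOf_sameCycle_eq_support_cycleOf {x : α} (hx : x ∈ f.support) :
    {y | f.SameCycle x y} = ↑(f.cycleOf x).support := by
  ext y
  simp only [Set.mem_ofPred_eq, mem_coe, mem_support_cycleOf_iff, hx, and_true]

theorem map_ncard_moved_sameCycle_classes :
    ({q | q.out ∈ f.support} : Finset (Quotient (SameCycle.setoid f))).val.map
      (fun q => {x | ⟦x⟧ = q}.ncard) = f.cycleType := by
  rw [cycleType_def]
  refine Multiset.map_eq_map_of_bij_of_nodup _ _ (nodup _) (nodup _)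
    (fun q _ => f.cycleOf q.out) ?_ ?_ ?_ ?_
  · intro q hq
    exact cycleOf_mem_cycleFactorsFinset_iff.mpr (mem_filter.mp hq).2
  · intro q hq q' hq' h
    rw [← Quotient.out_equiv_out]
    exact (sameCycle_iff_cycleOf_eq_of_mem_support (mem_filter.mp hq).2 (mem_filter.mp hq').2).mpr h
  · intro c hc
    obtain ⟨x, hx⟩ := (mem_cycleFactorsFinset_iff.mp hc).1.nonempty_support
    have hxf : f.SameCycle (⟦x⟧ : Quotient (SameCycle.setoid f)).out x :=
      Quotient.mk_out (s := SameCycle.setoid f) x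
    refine ⟨⟦x⟧, mem_filter.mpr ⟨mem_univ _, ?_⟩, ?_⟩
    · exact hxf.mem_support_iff.mpr (mem_cycleFactorsFinset_support_le hc hx)
    · rw [hxf.cycleOf_eq, ← cycle_is_cycleOf hx hc]
  · intro q hq
    rw [Function.comp_apply, setOf_mk_eq_eq_setOf_sameCycle_out,
      setOf_sameCycle_eq_support_cycleOf f (mem_filter.mp hq).2, Set.ncard_coe_finset]

theorem map_ncard_fixed_sameCycle_classes :
    ({q | q.out ∉ f.support} : Finset (Quotient (SameCycle.setoid f))).val.map
      (fun q => {x | ⟦x⟧ = q}.ncard) = Multiset.replicate (Fintype.card α - #f.support) 1 := by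
  rw [Multiset.eq_replicate]
  constructor
  · rw [Multiset.card_map, ← card_compl, card_val]
    refine card_nbij' Quotient.out (fun x => ⟦x⟧) ?_ ?_ ?_ ?_
    · intro q hq
      simpa using hq
    · intro x hx
      exact mem_filter.mpr ⟨mem_univ _,
        (Quotient.mk_out (s := SameCycle.setoid f) x).mem_support_iff.not.mpr (mem_compl.mp hx)⟩
    · intro q _
      exact Quotient.out_eq q
    · intro x hx
      exact ((Quotient.mk_out (s := SameCycle.setoid f) x).symm.eq_of_left
        (notMem_support.mp (mem_compl.mp hx))).symm
  · simp only [Multiset.mem_map, mem_val, mem_filter, mem_univ, true_and]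
    rintro _ ⟨q, hq, rfl⟩
    rw [setOf_mk_eq_eq_setOf_sameCycle_out, setOf_sameCycle_eq_singleton f (notMem_support.mp hq),
      Set.ncard_singleton]

theorem map_ncard_sameCycle_classes :
    (univ : Finset (Quotient (SameCycle.setoid f))).val.map (fun q => {x | ⟦x⟧ = q}.ncard) =
      f.partition.parts := by
  rw [parts_partition, ← map_ncard_moved_sameCycle_classes, ← map_ncard_fixed_sameCycle_classes,
    ← Multiset.map_add, filter_val, filter_val, Multiset.filter_add_not]

end Equiv.Perm

namespace SimpleGraph

variable {V W : Type*} {G : SimpleGraph V} {s : Setoid W} {f : V → W}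

def connectedComponentEquivQuotient (hf : Function.Surjective f)
    (h : ∀ x y, G.Reachable x y ↔ s (f x) (f y)) : G.ConnectedComponent ≃ Quotient s :=
  Equiv.ofBijective
    (ConnectedComponent.lift (fun x => ⟦f x⟧) fun _ _ p _ =>
      Quotient.sound ((h _ _).mp p.reachable))
    (show Function.Bijective _ from ⟨fun c d => ConnectedComponent.ind₂ (fun x y hxy =>
        ConnectedComponent.sound ((h x y).mpr (Quotient.exact hxy))) c d,
      fun q => by
        obtain ⟨w, rfl⟩ := Quotient.exists_rep q
        obtain ⟨x, rfl⟩ := hf w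
        exact ⟨G.connectedComponentMk x, rfl⟩⟩)

@[simp]
theorem connectedComponentEquivQuotient_mk (hf : Function.Surjective f)
    (h : ∀ x y, G.Reachable x y ↔ s (f x) (f y)) (x : V) :
    connectedComponentEquivQuotient hf h (G.connectedComponentMk x) = ⟦f x⟧ :=
  rfl

theorem supp_eq_preimage_connectedComponentEquivQuotient (hf : Function.Surjective f)
    (h : ∀ x y, G.Reachable x y ↔ s (f x) (f y)) (c : G.ConnectedComponent) :
    c.supp = f ⁻¹' {w | ⟦w⟧ = connectedComponentEquivQuotient hf h c} := by
  ext x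
  rw [ConnectedComponent.mem_supp_iff, ← (connectedComponentEquivQuotient hf h).apply_eq_iff_eq,
    connectedComponentEquivQuotient_mk]
  rfl

end SimpleGraph

open Equiv Equiv.Perm SimpleGraph

def pairIndex (n : ℕ) (x : Fin (2*n)) : Fin n := ⟨x.1 / 2, by have := x.2; omega⟩

variable {n : ℕ}

@[simp] theorem pairIndex_lo (k : Fin n) : pairIndex n (lo n k) = k := by
  ext; simp only [pairIndex, lo]; omega

@[simp] theorem pairIndex_hi (k : Fin n) : pairIndex n (hi n k) = k := by
  ext; simp only [pairIndex, hi]; omega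

theorem eq_lo_or_eq_hi_pairIndex (x : Fin (2*n)) :
    x = lo n (pairIndex n x) ∨ x = hi n (pairIndex n x) := by
  rcases Nat.mod_two_eq_zero_or_one x.1 with h | h
  · left; ext; simp only [lo, pairIndex]; omega
  · right; ext; simp only [hi, pairIndex]; omega

theorem pairIndex_surjective : Function.Surjective (pairIndex n) :=
  fun k => ⟨lo n k, pairIndex_lo k⟩

theorem lo_ne_hi (j k : Fin n) : lo n j ≠ hi n k := by
  simp only [ne_eq, Fin.ext_iff, lo, hi]; omega

theorem lo_injective : Function.Injective (lo n) := fun j k h => by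
  simpa using congrArg (pairIndex n) h

theorem hi_injective : Function.Injective (hi n) := fun j k h => by
  simpa using congrArg (pairIndex n) h

theorem preimage_pairIndex (s : Set (Fin n)) : pairIndex n ⁻¹' s = lo n '' s ∪ hi n '' s := by
  ext x
  constructor
  · intro hx
    rcases eq_lo_or_eq_hi_pairIndex x with h | h
    · exact Or.inl ⟨_, hx, h.symm⟩
    · exact Or.inr ⟨_, hx, h.symm⟩
  · rintro (⟨k, hk, rfl⟩ | ⟨k, hk, rfl⟩) <;> simpa using hk

theorem ncard_preimage_pairIndex (s : Set (Fin n)) :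
    (pairIndex n ⁻¹' s).ncard = 2 * s.ncard := by
  rw [preimage_pairIndex, Set.ncard_union_eq, Set.ncard_image_of_injective _ lo_injective,
    Set.ncard_image_of_injective _ hi_injective, two_mul]
  rw [Set.disjoint_left]
  rintro _ ⟨j, -, rfl⟩ ⟨k, -, h⟩
  exact lo_ne_hi j k h.symm

theorem pairGraph_adj_lo_hi (σ : Perm (Fin (2*n))) (k : Fin n) :
    (pairGraph n σ).Adj (lo n k) (hi n k) :=
  (fromRel_adj _ _ _).mpr ⟨lo_ne_hi k k, Or.inl ⟨k, Or.inl ⟨rfl, rfl⟩⟩⟩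

theorem pairGraph_adj_apply_lo_hi (σ : Perm (Fin (2*n))) (k : Fin n) :
    (pairGraph n σ).Adj (σ (lo n k)) (σ (hi n k)) :=
  (fromRel_adj _ _ _).mpr
    ⟨σ.injective.ne (lo_ne_hi k k), Or.inl ⟨k, Or.inr ⟨rfl, rfl⟩⟩⟩

theorem pairGraph_reachable_lo_pairIndex (σ : Perm (Fin (2*n))) (x : Fin (2*n)) :
    (pairGraph n σ).Reachable x (lo n (pairIndex n x)) := by
  rcases eq_lo_or_eq_hi_pairIndex x with h | h
  · rw [← h]
  · nth_rw 1 [h]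
    exact (pairGraph_adj_lo_hi σ _).reachable.symm

section

variable {σ : Perm (Fin (2*n))} {π₁ π₂ : Perm (Fin n)}
  (h1 : ∀ k : Fin n, σ (lo n k) = lo n (π₁ k))
  (h2 : ∀ k : Fin n, σ (hi n k) = hi n (π₂ k))
include h1 h2

theorem pairGraph_adj_sameCycle {x y : Fin (2*n)} (h : (pairGraph n σ).Adj x y) :
    (π₁ * π₂⁻¹).SameCycle (pairIndex n x) (pairIndex n y) := by
  have hedge (k : Fin n) : (π₁ * π₂⁻¹).SameCycle (π₁ k) (π₂ k) := ⟨-1, by simp⟩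
  have hrel : ∀ x y : Fin (2*n), (∃ k : Fin n,
      (x = lo n k ∧ y = hi n k) ∨ (x = σ (lo n k) ∧ y = σ (hi n k))) →
      (π₁ * π₂⁻¹).SameCycle (pairIndex n x) (pairIndex n y) := by
    rintro x y ⟨k, ⟨rfl, rfl⟩ | ⟨rfl, rfl⟩⟩
    · simp only [pairIndex_lo, pairIndex_hi, SameCycle.refl]
    · simpa only [h1, h2, pairIndex_lo, pairIndex_hi] using hedge k
  rcases ((fromRel_adj _ _ _).mp h).2 with h | h
  · exact hrel x y h
  · exact (hrel y x h).symm

theorem pairGraph_reachable_sameCycle {x y : Fin (2*n)} (h : (pairGraph n σ).Reachable x y) :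
    (π₁ * π₂⁻¹).SameCycle (pairIndex n x) (pairIndex n y) := by
  obtain ⟨w⟩ := h
  induction w with
  | nil => rfl
  | cons hadj _ ih => exact (pairGraph_adj_sameCycle h1 h2 hadj).trans ih

theorem pairGraph_reachable_lo_mul_inv_apply (j : Fin n) :
    (pairGraph n σ).Reachable (lo n ((π₁ * π₂⁻¹) j)) (lo n j) := by
  obtain ⟨k, rfl⟩ := π₂.surjective j
  have hstep := (pairGraph_adj_apply_lo_hi σ k).reachable
  rw [h1, h2] at hstep
  simpa using hstep.trans (pairGraph_adj_lo_hi σ (π₂ k)).reachable.symm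

theorem pairGraph_reachable_iff (x y : Fin (2*n)) :
    (pairGraph n σ).Reachable x y ↔
      (π₁ * π₂⁻¹).SameCycle (pairIndex n x) (pairIndex n y) := by
  refine ⟨pairGraph_reachable_sameCycle h1 h2, fun h => ?_⟩
  have hlo : (pairGraph n σ).Reachable (lo n (pairIndex n x)) (lo n (pairIndex n y)) :=
    h.rel_of_equivalence ((reachable_is_equivalence _).comap (lo n))
      (pairGraph_reachable_lo_mul_inv_apply h1 h2)
  exact (pairGraph_reachable_lo_pairIndex σ x).trans
    (hlo.trans (pairGraph_reachable_lo_pairIndex σ y).symm)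

theorem cosetType_eq_map_ncard_sameCycle_classes :
    cosetType n σ = (univ : Finset (Quotient (SameCycle.setoid (π₁ * π₂⁻¹)))).val.map
      (fun q => {j | ⟦j⟧ = q}.ncard) := by
  let e := connectedComponentEquivQuotient (s := SameCycle.setoid (π₁ * π₂⁻¹))
    pairIndex_surjective (pairGraph_reachable_iff h1 h2)
  rw [cosetType, ← @Multiset.map_univ_val_equiv _ _ (Fintype.ofFinite _) _ e, Multiset.map_map]
  congr 1 with c
  rw [Function.comp_apply, supp_eq_preimage_connectedComponentEquivQuotient,
    ncard_preimage_pairIndex, Nat.mul_div_cancel_left _ two_pos]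

end

/-- If `σ(2k-1) = 2π₁(k)-1` and `σ(2k) = 2π₂(k)` for all `k`, then the coset-type of
`σ` equals the cycle-type of `π₁ π₂⁻¹` (as a partition of `n`). -/
theorem stmt10 (n : ℕ) (σ : Equiv.Perm (Fin (2*n))) (π₁ π₂ : Equiv.Perm (Fin n))
    (h1 : ∀ k : Fin n, σ (lo n k) = lo n (π₁ k))
    (h2 : ∀ k : Fin n, σ (hi n k) = hi n (π₂ k)) :
    cosetType n σ = (Equiv.Perm.partition (π₁ * π₂⁻¹)).parts := by
  rw [cosetType_eq_map_ncard_sameCycle_classes h1 h2, map_ncard_sameCycle_classes]
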